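/- arXiv:0711.2675 — 7 statements merged into one kernel-verified Lean document; each statement's English description precedes it below -/
import Mathlib

section
/- The sequence defined by u_0 = 1/2 and the recurrence (n+1)·u_k = k·u_{k-1} + (n-k-1)·u_{k+1} for k = 1, ..., n-1 (with u_n = 0) satisfies the identity i·u_{i-1} = n·u_{n-1} + (n-i)·u_i for all i = 1, ..., n. -/
/-! With `g k = k u_{k-1} - (n - k) u_k`, the recurrence at `k` is exactly `g k = g (k + 1)`, so
`g` is constant on `[1, n]` and `g i = g n = n u_{n-1}`. -/

theorem Nat.eq_of_forall_eq_succ {α : Type*} {f : ℕ → α} {a b : ℕ} (hab : a ≤ b)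
    (hf : ∀ k, a ≤ k → k < b → f k = f (k + 1)) : f a = f b := by
  induction b, hab using Nat.le_induction with
  | base => rfl
  | succ m ham ih =>
    exact (ih fun k hak hkm => hf k hak (by omega)).trans (hf m ham (by omega))

theorem stmt0_general (n : ℕ) (u : ℕ → ℝ)
    (hrec : ∀ k, 1 ≤ k → k ≤ n - 1 →
      ((n : ℝ) + 1) * u k = (k : ℝ) * u (k - 1) + ((n : ℝ) - k - 1) * u (k + 1)) :
    ∀ i, 1 ≤ i → i ≤ n →
      (i : ℝ) * u (i - 1) = (n : ℝ) * u (n - 1) + ((n : ℝ) - i) * u i := by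
  intro i hi hin
  set g : ℕ → ℝ := fun k => k * u (k - 1) - (n - k) * u k with hg
  have hconst : g i = g n := Nat.eq_of_forall_eq_succ hin fun k hik hkn => by
    have hk := hrec k (by omega) (by omega)
    simp only [hg, Nat.add_sub_cancel, Nat.cast_add, Nat.cast_one]
    linarith
  simp only [hg, sub_self, zero_mul, sub_zero] at hconst
  linarith

theorem stmt0 (n : ℕ) (hn : 2 ≤ n) (u : ℕ → ℝ)
    (h0 : u 0 = 1/2) (hend : u n = 0)
    (hrec : ∀ k, 1 ≤ k → k ≤ n - 1 →
      ((n : ℝ) + 1) * u k = (k : ℝ) * u (k - 1) + ((n : ℝ) - k - 1) * u (k + 1)) :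
    ∀ i, 1 ≤ i → i ≤ n →
      (i : ℝ) * u (i - 1) = (n : ℝ) * u (n - 1) + ((n : ℝ) - i) * u i :=
  stmt0_general n u hrec
end

section
/- The sequence z_i := (i+1)(i+2)···(n-1)·u_i, where u satisfies i·u_{i-1} = n·u_{n-1} + (n-i)·u_i for 1 ≤ i ≤ n with u_{n-1} = c, satisfies z_{n-j-1} = c·j!·∑_{l=0}^{j} C(n, j-l) for all j = 0, 1, ..., n-1. -/
/-!
Multiplying the recurrence by `(i+1)⋯(n-1)` turns it into
`z (i-1) = c · n(n-1)⋯(i+1) + (n-i) · z i`. In terms of `w j = z (n-j-1)` this reads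
`w (j+1) = c · (j+1)! · C(n, j+1) + (j+1) · w j`, so `w j / j!` is the partial sum
`c · ∑_{k ≤ j} C(n, k)`.
-/

open Finset Nat

theorem Nat.prod_Ioc_id_eq_descFactorial {i n : ℕ} (h : i ≤ n) :
    ∏ m ∈ Ioc i n, m = n.descFactorial (n - i) := by
  obtain ⟨k, rfl⟩ := Nat.exists_eq_add_of_le h
  induction k with
  | zero => simp
  | succ k ih =>
    rw [← add_assoc, prod_Ioc_succ_top (by omega), ih (by omega),
      show i + k + 1 - i = k + 1 by omega, succ_descFactorial_succ, show i + k - i = k by omega,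
      mul_comm]

theorem mul_prod_Icc_pred_eq_descFactorial {R : Type*} [CommSemiring R] {i n : ℕ} (h : i < n) :
    (n : R) * ∏ m ∈ Icc (i + 1) (n - 1), (m : R) = n.descFactorial (n - i) := by
  obtain ⟨n, rfl⟩ := Nat.exists_eq_add_of_lt h
  rw [← prod_Ioc_id_eq_descFactorial (by omega), Icc_add_one_left_eq_Ioc,
    prod_Ioc_succ_top (by omega)]
  push_cast
  ring

theorem eq_factorial_mul_sum_range_of_succ {R : Type*} [CommSemiring R] (w a : ℕ → R) (N : ℕ)
    (h0 : w 0 = a 0)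
    (hsucc : ∀ j < N, w (j + 1) = (j + 1)! * a (j + 1) + (j + 1) * w j) :
    ∀ j ≤ N, w j = j ! * ∑ k ∈ range (j + 1), a k := by
  intro j hj
  induction j with
  | zero => simp [h0]
  | succ j ih =>
    rw [hsucc j hj, ih (by omega), sum_range_succ _ (j + 1), factorial_succ]
    push_cast
    ring

theorem scaled_pred_eq_of_recurrence {n i : ℕ} {c : ℝ} {u z : ℕ → ℝ}
    (hz : ∀ i, z i = (∏ m ∈ Icc (i + 1) (n - 1), (m : ℝ)) * u i) (hi : 1 ≤ i) (hin : i < n)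
    (hrec : (i : ℝ) * u (i - 1) = n * c + (n - i) * u i) :
    z (i - 1) = c * n.descFactorial (n - i) + (n - i) * z i := by
  have hsplit : ∏ m ∈ Icc i (n - 1), (m : ℝ) = i * ∏ m ∈ Icc (i + 1) (n - 1), (m : ℝ) := by
    rw [Icc_eq_cons_Ioc (by omega), prod_cons, Icc_add_one_left_eq_Ioc]
  rw [hz, hz, Nat.sub_add_cancel hi, hsplit, ← mul_prod_Icc_pred_eq_descFactorial hin]
  linear_combination (∏ m ∈ Icc (i + 1) (n - 1), (m : ℝ)) * hrec

theorem stmt3_general (n : ℕ) (c : ℝ) (u : ℕ → ℝ)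
    (huc : u (n - 1) = c)
    (hrec : ∀ i, 1 ≤ i → i ≤ n - 1 →
      (i : ℝ) * u (i - 1) = (n : ℝ) * c + ((n : ℝ) - i) * u i)
    (z : ℕ → ℝ)
    (hz : ∀ i, z i = (∏ m ∈ Finset.Icc (i + 1) (n - 1), (m : ℝ)) * u i) :
    ∀ j, j ≤ n - 1 →
      z (n - j - 1) = c * (j.factorial : ℝ) *
        ∑ l ∈ Finset.range (j + 1), (n.choose (j - l) : ℝ) := by
  have hsucc : ∀ j < n - 1, z (n - (j + 1) - 1) =
      (j + 1)! * (c * n.choose (j + 1)) + (j + 1) * z (n - j - 1) := by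
    intro j hj
    have hni : ((n : ℝ) - (n - j - 1 : ℕ)) = j + 1 := by
      rw [Nat.cast_sub (by omega), Nat.cast_sub (by omega)]
      push_cast
      ring
    rw [show n - (j + 1) - 1 = n - j - 1 - 1 by omega,
      scaled_pred_eq_of_recurrence hz (by omega) (by omega) (hrec _ (by omega) (by omega)), hni,
      show n - (n - j - 1) = j + 1 by omega, descFactorial_eq_factorial_mul_choose]
    push_cast
    ring
  intro j hj
  rw [eq_factorial_mul_sum_range_of_succ (fun j => z (n - j - 1)) (fun k => c * n.choose k)
    (n - 1) (by simp [hz, huc]) hsucc j hj, ← sum_range_reflect, mul_sum, mul_sum]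
  refine sum_congr rfl fun l _ => ?_
  rw [add_tsub_cancel_right]
  ring

theorem stmt3 (n : ℕ) (hn : 2 ≤ n) (c : ℝ) (u : ℕ → ℝ)
    (huc : u (n - 1) = c)
    (hrec : ∀ i, 1 ≤ i → i ≤ n - 1 →
      (i : ℝ) * u (i - 1) = (n : ℝ) * c + ((n : ℝ) - i) * u i)
    (z : ℕ → ℝ)
    (hz : ∀ i, z i = (∏ m ∈ Finset.Icc (i + 1) (n - 1), (m : ℝ)) * u i) :
    ∀ j, j ≤ n - 1 →
      z (n - j - 1) = c * (j.factorial : ℝ) *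
        ∑ l ∈ Finset.range (j + 1), (n.choose (j - l) : ℝ) :=
  stmt3_general n c u huc hrec z hz
end

section
/- The unique solution of the system u_0 = 1/2, u_n = 0, (n+1)·u_k = k·u_{k-1} + (n-k-1)·u_{k+1} for 1 ≤ k ≤ n-1 is given by u_k = (∑_{i=k+1}^{n} C(n,i)) / (C(n-1,k)·(2^{n+1} - 2)) for k = 0, 1, ..., n-1. -/
/-! Put `f k = C(n-1,k) u k`. Multiplying the recurrence by `C(n-1,k)` turns it into
`(k+1) (f (k+1) - f k) = (n-k) (f k - f (k-1))`, which says that the differences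
`f k - f (k+1)` are proportional to `C(n,k+1)`. As `f n = C(n-1,n) u n = 0`, telescoping gives
`f k = B ∑_{i>k} C(n,i)`, and `f 0 = u 0 = 1/2` fixes `B = 1 / (2^(n+1) - 2)`. -/

open Finset

theorem Nat.cast_choose_succ_mul {R : Type*} [CommRing R] (n k : ℕ) :
    (n.choose (k + 1) : R) * (k + 1) = n.choose k * (n - k) := by
  rcases le_or_gt k n with hk | hk
  · have h := congrArg (Nat.cast : ℕ → R) (Nat.choose_succ_right_eq n k)
    push_cast [Nat.cast_sub hk] at h
    exact h
  · simp [Nat.choose_eq_zero_of_lt hk, Nat.choose_eq_zero_of_lt (Nat.lt_succ_of_lt hk)]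

theorem Nat.sum_Icc_one_choose {R : Type*} [CommRing R] (n : ℕ) :
    ∑ i ∈ Icc 1 n, (n.choose i : R) = 2 ^ n - 1 := by
  have h := sum_range_succ' (fun i => (n.choose i : R)) n
  rw [← Nat.cast_sum, Nat.sum_range_choose, range_eq_Ico, sum_Ico_add' (fun i => (n.choose i : R)),
    Ico_add_one_right_eq_Icc] at h
  push_cast at h
  simp only [Nat.choose_zero_right, Nat.cast_one] at h
  rw [h, add_sub_cancel_right]

theorem sub_eq_sum_Icc_of_sub_succ {M : Type*} [AddCommGroup M] {f g : ℕ → M} {k n : ℕ}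
    (hkn : k ≤ n) (h : ∀ i, k ≤ i → i < n → f i - f (i + 1) = g (i + 1)) :
    f k - f n = ∑ i ∈ Icc (k + 1) n, g i := by
  rw [← Ico_add_one_right_eq_Icc, ← sum_Ico_add' g k n 1, ← neg_sub, ← sum_Ico_sub f hkn,
    ← sum_neg_distrib]
  refine sum_congr rfl fun i hi => ?_
  rw [mem_Ico] at hi
  rw [neg_sub, h i hi.1 hi.2]

theorem choose_mul_sub_recurrence {R : Type*} [CommRing R] (N k : ℕ) (hk : 1 ≤ k) (u : ℕ → R)
    (h : ((N : R) + 2) * u k = k * u (k - 1) + (N - k) * u (k + 1)) :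
    ((k : R) + 1) * (N.choose (k + 1) * u (k + 1) - N.choose k * u k) =
      ((N : R) + 1 - k) * (N.choose k * u k - N.choose (k - 1) * u (k - 1)) := by
  obtain ⟨j, rfl⟩ : ∃ j, k = j + 1 := ⟨k - 1, by omega⟩
  have c1 := Nat.cast_choose_succ_mul (R := R) N j
  have c2 := Nat.cast_choose_succ_mul (R := R) N (j + 1)
  simp only [Nat.add_sub_cancel] at h ⊢
  push_cast at h c1 c2 ⊢
  linear_combination -(N.choose (j + 1) : R) * h + u (j + 2) * c2 - u j * c1

theorem sub_succ_eq_mul_choose {K : Type*} [Field K] [CharZero K] {f : ℕ → K} {n : ℕ}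
    (h : ∀ k, 1 ≤ k → k < n →
      ((k : K) + 1) * (f (k + 1) - f k) = (n - k) * (f k - f (k - 1))) :
    ∀ k < n, f k - f (k + 1) = (f 0 - f 1) / n * n.choose (k + 1) := by
  intro k hk
  induction k with
  | zero =>
    have hn : (n : K) ≠ 0 := by exact_mod_cast (by omega : n ≠ 0)
    rw [zero_add, Nat.choose_one_right, div_mul_cancel₀ _ hn]
  | succ k ih =>
    have hrec := h (k + 1) (by omega) hk
    have hc := Nat.cast_choose_succ_mul (R := K) n (k + 1)
    rw [Nat.add_sub_cancel] at hrec
    push_cast at hrec hc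
    have hk2 : (k : K) + 1 + 1 ≠ 0 := by exact_mod_cast (by omega : k + 1 + 1 ≠ 0)
    refine mul_left_cancel₀ hk2 ?_
    linear_combination -hrec + (n - (k : K) - 1) * ih (by omega) - (f 0 - f 1) / n * hc

theorem stmt4_general (n : ℕ) (hn : 2 ≤ n) (u : ℕ → ℝ)
    (h0 : u 0 = 1/2)
    (hrec : ∀ k, 1 ≤ k → k ≤ n - 1 →
      ((n : ℝ) + 1) * u k = (k : ℝ) * u (k - 1) + ((n : ℝ) - k - 1) * u (k + 1)) :
    ∀ k, k ≤ n - 1 →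
      u k = (∑ i ∈ Finset.Icc (k + 1) n, (n.choose i : ℝ)) /
        (((n - 1).choose k : ℝ) * (2 ^ (n + 1) - 2)) := by
  obtain ⟨N, rfl⟩ : ∃ N, n = N + 1 := ⟨n - 1, by omega⟩
  set f : ℕ → ℝ := fun i => N.choose i * u i
  have hdiff := sub_succ_eq_mul_choose (f := f) (n := N + 1) fun k hk1 hk2 => by
    have hk := hrec k hk1 (by omega)
    push_cast at hk ⊢
    exact choose_mul_sub_recurrence N k hk1 u (by linear_combination hk)
  set B := (f 0 - f 1) / ((N + 1 : ℕ) : ℝ)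
  have hfB : ∀ k ≤ N + 1, f k = B * ∑ i ∈ Icc (k + 1) (N + 1), ((N + 1).choose i : ℝ) := by
    intro k hk
    have hfN : f (N + 1) = 0 := by simp [f, Nat.choose_succ_self]
    rw [mul_sum, ← sub_zero (f k), ← hfN]
    exact sub_eq_sum_Icc_of_sub_succ hk fun i _ hi => hdiff i hi
  have hB : B * (2 ^ (N + 1) - 1) = 1 / 2 := by
    simpa [f, h0, Nat.sum_Icc_one_choose] using (hfB 0 (by omega)).symm
  intro k hk
  rw [Nat.add_sub_cancel] at hk
  have hc : (N.choose k : ℝ) ≠ 0 := by exact_mod_cast (Nat.choose_pos hk).ne'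
  have hpow : (2 : ℝ) ^ (N + 1 + 1) - 2 ≠ 0 := by
    rw [pow_succ, pow_succ]
    linarith [one_le_pow₀ (M₀ := ℝ) (n := N) one_le_two]
  rw [Nat.add_sub_cancel, eq_div_iff (mul_ne_zero hc hpow)]
  linear_combination
    (∑ i ∈ Icc (k + 1) (N + 1), ((N + 1).choose i : ℝ)) * 2 * hB + (2 ^ (N + 2) - 2) * hfB k (by omega)

theorem stmt4 (n : ℕ) (hn : 2 ≤ n) (u : ℕ → ℝ)
    (h0 : u 0 = 1/2) (hend : u n = 0)
    (hrec : ∀ k, 1 ≤ k → k ≤ n - 1 →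
      ((n : ℝ) + 1) * u k = (k : ℝ) * u (k - 1) + ((n : ℝ) - k - 1) * u (k + 1)) :
    ∀ k, k ≤ n - 1 →
      u k = (∑ i ∈ Finset.Icc (k + 1) n, (n.choose i : ℝ)) /
        (((n - 1).choose k : ℝ) * (2 ^ (n + 1) - 2)) :=
  stmt4_general n hn u h0 hrec
end

section
/- Define w_k = 1/2 − (∑_{i=k+1}^{n} C(n,i)) / (2(2^n − 1)·C(n-1,k)) for k = 0, ..., n-1. Then w_0 = 0, (n+1)·w_{n-1} = (n-1)·w_{n-2} + 1, and (n+1)·w_k = k·w_{k-1} + (n-k-1)·w_{k+1} + 1 for 1 ≤ k ≤ n-2. -/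
/-!
Write `T k = ∑_{i > k} C(n, i)` and `c k = C(n - 1, k)`, so that `w k = 1/2 - T k / (2 (2^n - 1) c k)`.
The constant `1/2` solves the inhomogeneous recurrence, so it suffices that `T k / c k` solves the
homogeneous one. Since `k c k = (n - k) c (k - 1)` and `(n - k - 1) c k = (k + 1) c (k + 1)`, this is
`(n + 1) T k = (n - k) T (k - 1) + (k + 1) T (k + 1)`, which follows from `T (k - 1) = C(n, k) + T k`
and `(n - k) C(n, k) = (k + 1) C(n, k + 1)`. At `k = n - 1` the coefficient of `w n` vanishes, so the
boundary equation is the same recurrence.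
-/

open Finset

noncomputable def tailSum (n k : ℕ) : ℝ := ∑ i ∈ Icc (k + 1) n, (n.choose i : ℝ)

noncomputable def levelHittingProb (n k : ℕ) : ℝ :=
  1 / 2 - tailSum n k / (2 * (2 ^ n - 1) * ((n - 1).choose k : ℝ))

lemma cast_choose_succ_mul (m k : ℕ) :
    (m.choose (k + 1) : ℝ) * (k + 1) = m.choose k * (m - k) := by
  rcases le_or_gt k m with hk | hk
  · rw [← Nat.cast_sub hk]
    exact_mod_cast Nat.choose_succ_right_eq m k
  · simp [Nat.choose_eq_zero_of_lt hk, Nat.choose_eq_zero_of_lt (hk.trans (Nat.lt_succ_self k))]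

lemma tailSum_zero (n : ℕ) : tailSum n 0 = 2 ^ n - 1 := by
  have hsum : ∑ i ∈ range (n + 1), (n.choose i : ℝ) = 2 ^ n := by
    exact_mod_cast Nat.sum_range_choose n
  rw [range_eq_Ico, sum_eq_sum_Ico_succ_bot (by omega : 0 < n + 1), Ico_add_one_right_eq_Icc] at hsum
  rw [tailSum, ← hsum, Nat.choose_zero_right, Nat.cast_one, add_sub_cancel_left]

lemma tailSum_eq_choose_add (n k : ℕ) : tailSum n k = n.choose (k + 1) + tailSum n (k + 1) := by
  rcases le_or_gt (k + 1) n with hk | hk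
  · rw [tailSum, Icc_eq_cons_Ioc hk, sum_cons, ← Icc_add_one_left_eq_Ioc, tailSum]
  · simp [tailSum, Nat.choose_eq_zero_of_lt hk, Icc_eq_empty_of_lt hk,
      Icc_eq_empty_of_lt (hk.trans (Nat.lt_succ_self _))]

lemma tailSum_recurrence (n k : ℕ) (hk : 1 ≤ k) :
    ((n : ℝ) + 1) * tailSum n k = (n - k) * tailSum n (k - 1) + (k + 1) * tailSum n (k + 1) := by
  obtain ⟨j, rfl⟩ : ∃ j, k = j + 1 := ⟨k - 1, by omega⟩
  have hprev := tailSum_eq_choose_add n j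
  have hnext := tailSum_eq_choose_add n (j + 1)
  have hchoose := cast_choose_succ_mul n (j + 1)
  rw [Nat.add_sub_cancel]
  push_cast at *
  linear_combination (-(n - j - 1 : ℝ)) * hprev + (j + 2) * hnext + hchoose

lemma tailSum_div_choose_recurrence (n k : ℕ) (hk : 1 ≤ k) (hkn : k < n) :
    ((n : ℝ) + 1) * (tailSum n k / (n - 1).choose k) =
      k * (tailSum n (k - 1) / (n - 1).choose (k - 1)) +
        (n - k - 1) * (tailSum n (k + 1) / (n - 1).choose (k + 1)) := by
  have hc : ((n - 1).choose k : ℝ) ≠ 0 := by exact_mod_cast (Nat.choose_pos (by omega)).ne'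
  have hc' : ((n - 1).choose (k - 1) : ℝ) ≠ 0 := by exact_mod_cast (Nat.choose_pos (by omega)).ne'
  have hlow := cast_choose_succ_mul (n - 1) (k - 1)
  have hhigh := cast_choose_succ_mul (n - 1) k
  rw [Nat.sub_add_cancel hk, Nat.cast_sub hk, Nat.cast_sub (by omega : 1 ≤ n), Nat.cast_one] at hlow
  rw [Nat.cast_sub (by omega : 1 ≤ n), Nat.cast_one] at hhigh
  have hlowTerm : (k : ℝ) * (tailSum n (k - 1) / (n - 1).choose (k - 1)) =
      (n - k) * tailSum n (k - 1) / (n - 1).choose k := by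
    field_simp
    linear_combination tailSum n (k - 1) * hlow
  have hhighTerm : ((n : ℝ) - k - 1) * (tailSum n (k + 1) / (n - 1).choose (k + 1)) =
      (k + 1) * tailSum n (k + 1) / (n - 1).choose k := by
    rcases eq_or_ne ((n - 1).choose (k + 1) : ℝ) 0 with h0 | h0
    · have hnk : n < k + 2 := by
        by_contra!
        exact (Nat.choose_pos (by omega : k + 1 ≤ n - 1)).ne' (by exact_mod_cast h0)
      simp [h0, tailSum, Icc_eq_empty_of_lt hnk]
    · rw [mul_div_assoc', div_eq_div_iff h0 hc]
      linear_combination (-tailSum n (k + 1)) * hhigh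
  rw [hlowTerm, hhighTerm]
  field_simp
  linear_combination tailSum_recurrence n k hk

lemma levelHittingProb_zero (n : ℕ) (hn : n ≠ 0) : levelHittingProb n 0 = 0 := by
  have hD : (2 : ℝ) ^ n - 1 ≠ 0 := sub_ne_zero.mpr (one_lt_pow₀ one_lt_two hn).ne'
  rw [levelHittingProb, tailSum_zero, Nat.choose_zero_right, Nat.cast_one]
  field_simp
  ring

lemma levelHittingProb_recurrence (n k : ℕ) (hk : 1 ≤ k) (hkn : k < n) :
    ((n : ℝ) + 1) * levelHittingProb n k =
      k * levelHittingProb n (k - 1) + (n - k - 1) * levelHittingProb n (k + 1) + 1 := by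
  unfold levelHittingProb
  generalize 2 * ((2 : ℝ) ^ n - 1) = D
  linear_combination (-1 / D) * tailSum_div_choose_recurrence n k hk hkn

theorem stmt5 (n : ℕ) (hn : 2 ≤ n) (w : ℕ → ℝ)
    (hw : ∀ k, k ≤ n - 1 →
      w k = 1/2 - (∑ i ∈ Finset.Icc (k + 1) n, (n.choose i : ℝ)) /
        (2 * (2 ^ n - 1) * ((n - 1).choose k : ℝ))) :
    w 0 = 0 ∧
    ((n : ℝ) + 1) * w (n - 1) = ((n : ℝ) - 1) * w (n - 2) + 1 ∧
    ∀ k, 1 ≤ k → k ≤ n - 2 →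
      ((n : ℝ) + 1) * w k = (k : ℝ) * w (k - 1) + ((n : ℝ) - k - 1) * w (k + 1) + 1 := by
  have hw' : ∀ k, k ≤ n - 1 → w k = levelHittingProb n k := hw
  refine ⟨?_, ?_, fun k hk hkn => ?_⟩
  · rw [hw' 0 (Nat.zero_le _), levelHittingProb_zero n (by omega)]
  · have h := levelHittingProb_recurrence n (n - 1) (by omega) (by omega)
    rw [show n - 1 - 1 = n - 2 by omega, Nat.cast_sub (by omega : 1 ≤ n), Nat.cast_one] at h
    rw [hw' _ le_rfl, hw' _ (by omega)]
    linear_combination h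
  · rw [hw' k (by omega), hw' (k - 1) (by omega), hw' (k + 1) (by omega)]
    exact levelHittingProb_recurrence n k hk (by omega)
end

section
/- For n ≥ 2 and any k with 0 ≤ k ≤ n-1, the quantity u_k = (∑_{i=k+1}^{n} C(n,i)) / (C(n-1,k)·(2^{n+1}−2)) satisfies 0 ≤ u_k ≤ 1/2; consequently the hitting probability w_k = 1/2 − u_k lies in [0, 1/2]. -/
open Finset

theorem sum_Icc_succ_choose_add_one_le (n k : ℕ) :
    ∑ i ∈ Icc (k + 1) n, n.choose i + 1 ≤ 2 ^ n := by
  have h0 : 0 ∉ Icc (k + 1) n := by simp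
  have hsub : insert 0 (Icc (k + 1) n) ⊆ range (n + 1) := by
    intro i hi
    simp only [mem_insert, mem_Icc, mem_range] at hi ⊢
    omega
  calc ∑ i ∈ Icc (k + 1) n, n.choose i + 1
      = ∑ i ∈ insert 0 (Icc (k + 1) n), n.choose i := by
        rw [sum_insert h0, Nat.choose_zero_right, add_comm]
    _ ≤ ∑ i ∈ range (n + 1), n.choose i := sum_le_sum_of_subset hsub
    _ = 2 ^ n := Nat.sum_range_choose n

/-- `u_k` in the notation of the statement. -/
noncomputable def upperTailRatio (n k : ℕ) : ℝ :=
  (∑ i ∈ Icc (k + 1) n, (n.choose i : ℝ)) / (((n - 1).choose k : ℝ) * (2 ^ (n + 1) - 2))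

theorem upperTailRatio_nonneg (n k : ℕ) : 0 ≤ upperTailRatio n k := by
  have hpow : (2 : ℝ) ≤ 2 ^ (n + 1) := by
    simpa using pow_le_pow_right₀ (by norm_num : (1 : ℝ) ≤ 2) (Nat.le_add_left 1 n)
  unfold upperTailRatio
  exact div_nonneg (sum_nonneg fun i _ => by positivity)
    (mul_nonneg (by positivity) (by linarith))

theorem upperTailRatio_le_half {n k : ℕ} (hk : k ≤ n - 1) : upperTailRatio n k ≤ 1 / 2 := by
  have hC : (1 : ℝ) ≤ (n - 1).choose k := by exact_mod_cast Nat.choose_pos hk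
  have hpow : (1 : ℝ) ≤ 2 ^ n := one_le_pow₀ (by norm_num)
  have hsum : ∑ i ∈ Icc (k + 1) n, (n.choose i : ℝ) ≤ 2 ^ n - 1 := by
    have := sum_Icc_succ_choose_add_one_le n k
    rw [le_sub_iff_add_le]
    exact_mod_cast this
  unfold upperTailRatio
  apply div_le_of_le_mul₀ (mul_nonneg (by linarith) (by rw [pow_succ]; linarith)) (by norm_num)
  calc ∑ i ∈ Icc (k + 1) n, (n.choose i : ℝ)
      ≤ 2 ^ n - 1 := hsum
    _ ≤ ((n - 1).choose k : ℝ) * (2 ^ n - 1) := le_mul_of_one_le_left (by linarith) hC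
    _ = 1 / 2 * (((n - 1).choose k : ℝ) * (2 ^ (n + 1) - 2)) := by ring

theorem stmt6_general (n : ℕ) (k : ℕ) (hk : k ≤ n - 1) :
    (0 ≤ (∑ i ∈ Finset.Icc (k + 1) n, (n.choose i : ℝ)) /
        (((n - 1).choose k : ℝ) * (2 ^ (n + 1) - 2)) ∧
      (∑ i ∈ Finset.Icc (k + 1) n, (n.choose i : ℝ)) /
        (((n - 1).choose k : ℝ) * (2 ^ (n + 1) - 2)) ≤ 1/2) ∧
    (0 ≤ 1/2 - (∑ i ∈ Finset.Icc (k + 1) n, (n.choose i : ℝ)) /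
        (((n - 1).choose k : ℝ) * (2 ^ (n + 1) - 2)) ∧
      1/2 - (∑ i ∈ Finset.Icc (k + 1) n, (n.choose i : ℝ)) /
        (((n - 1).choose k : ℝ) * (2 ^ (n + 1) - 2)) ≤ 1/2) := by
  have h0 : 0 ≤ upperTailRatio n k := upperTailRatio_nonneg n k
  have h1 : upperTailRatio n k ≤ 1 / 2 := upperTailRatio_le_half hk
  unfold upperTailRatio at h0 h1
  exact ⟨⟨h0, h1⟩, by linarith, by linarith⟩

theorem stmt6 (n : ℕ) (hn : 2 ≤ n) (k : ℕ) (hk : k ≤ n - 1) :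
    (0 ≤ (∑ i ∈ Finset.Icc (k + 1) n, (n.choose i : ℝ)) /
        (((n - 1).choose k : ℝ) * (2 ^ (n + 1) - 2)) ∧
      (∑ i ∈ Finset.Icc (k + 1) n, (n.choose i : ℝ)) /
        (((n - 1).choose k : ℝ) * (2 ^ (n + 1) - 2)) ≤ 1/2) ∧
    (0 ≤ 1/2 - (∑ i ∈ Finset.Icc (k + 1) n, (n.choose i : ℝ)) /
        (((n - 1).choose k : ℝ) * (2 ^ (n + 1) - 2)) ∧
      1/2 - (∑ i ∈ Finset.Icc (k + 1) n, (n.choose i : ℝ)) /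
        (((n - 1).choose k : ℝ) * (2 ^ (n + 1) - 2)) ≤ 1/2) :=
  stmt6_general n k hk
end

section
/- For the simple random walk on the n-dimensional hypercube with a = (0,...,0,0) and b = (0,...,0,1), the probability of hitting b before a starting from x = (x_1,...,x_n) equals 1/2 − S/(2(2^n−1)·C(n-1,k)) if x_n = 0 and 1/2 + S/(2(2^n−1)·C(n-1,k)) if x_n = 1, where k = x_1 + ... + x_{n-1} and S = ∑_{i=k+1}^{n} C(n,i). -/
/-!
The walk's hitting probability is harmonic off `{a, b}`, and a function harmonic off a set
containing `a = 0` is determined by its values there (maximum principle: at an interior maximum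
every neighbour is again a maximum, so one can walk down to `0`). It therefore suffices to check
that the explicit formula `1/2 ± c k` with `c k = S k / (2 (2^n - 1) C(n-1, k))` is harmonic.
Flipping the last coordinate changes the sign, flipping one of the first `n - 1` moves `k` by one,
so harmonicity is the recurrence `(n + 1) c k = k c (k-1) + (n-1-k) c (k+1)`. Via
`k C(n-1, k) = (n - k) C(n-1, k-1)` this becomes `(n + 1) S k = (n - k) S (k-1) + (k + 1) S (k+1)`,
which follows from `S (k-1) = C(n, k) + S k` and `(k + 1) C(n, k+1) = (n - k) C(n, k)`.
-/

open Finset Function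

noncomputable def tailChooseSum (n k : ℕ) : ℝ := ∑ i ∈ Icc (k + 1) n, (n.choose i : ℝ)

noncomputable def hitCoeff (n k : ℕ) : ℝ :=
  tailChooseSum n k / (2 * (2 ^ n - 1) * ((n - 1).choose k : ℝ))

lemma choose_add_tailChooseSum (n k : ℕ) (hk : k ≤ n) :
    (n.choose k : ℝ) + tailChooseSum n k = ∑ i ∈ Icc k n, (n.choose i : ℝ) := by
  rw [tailChooseSum, ← insert_Icc_add_one_left_eq_Icc hk, sum_insert (by simp)]

lemma tailChooseSum_zero (n : ℕ) : tailChooseSum n 0 = 2 ^ n - 1 := by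
  have h := choose_add_tailChooseSum n 0 (Nat.zero_le n)
  rw [← Nat.range_succ_eq_Icc_zero, ← Nat.cast_sum, Nat.sum_range_choose] at h
  push_cast at h
  simp only [Nat.choose_zero_right, Nat.cast_one] at h
  linarith

lemma tailChooseSum_self (n : ℕ) : tailChooseSum n n = 0 := by
  simp [tailChooseSum]

lemma tailChooseSum_eq_choose_add (n k : ℕ) :
    tailChooseSum n k = n.choose (k + 1) + tailChooseSum n (k + 1) := by
  rcases lt_or_ge k n with hk | hk
  · rw [choose_add_tailChooseSum n (k + 1) hk]
    rfl
  · rw [tailChooseSum, tailChooseSum, Icc_eq_empty (by omega), Icc_eq_empty (by omega),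
      Nat.choose_eq_zero_of_lt (by omega)]
    simp

lemma succ_mul_tailChooseSum (n k : ℕ) :
    ((n : ℝ) + 1) * tailChooseSum n (k + 1) =
      (n - (k + 1)) * tailChooseSum n k + (k + 2) * tailChooseSum n (k + 2) := by
  have hS₀ := tailChooseSum_eq_choose_add n k
  have hS₁ : tailChooseSum n (k + 1) = n.choose (k + 2) + tailChooseSum n (k + 2) :=
    tailChooseSum_eq_choose_add n (k + 1)
  have hC : (n.choose (k + 2) : ℝ) * (k + 2) = n.choose (k + 1) * (n - (k + 1)) := by
    rcases le_or_gt (k + 1) n with hk | hk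
    · have h := congrArg (Nat.cast (R := ℝ)) (Nat.choose_succ_right_eq n (k + 1))
      push_cast [Nat.cast_sub hk] at h
      linear_combination h
    · simp [Nat.choose_eq_zero_of_lt hk, Nat.choose_eq_zero_of_lt (Nat.lt_succ_of_lt hk)]
  linear_combination (k + 2 : ℝ) * hS₁ - (n - (k + 1) : ℝ) * hS₀ + hC

lemma succ_div_choose_eq (n m : ℕ) (hm : m + 1 < n) :
    ((m : ℝ) + 1) / (n - 1).choose m = (n - (m + 1)) / (n - 1).choose (m + 1) := by
  rw [div_eq_div_iff (by exact_mod_cast (Nat.choose_pos (by omega)).ne')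
    (by exact_mod_cast (Nat.choose_pos (by omega)).ne')]
  have h := congrArg (Nat.cast (R := ℝ)) (Nat.choose_succ_right_eq (n - 1) m)
  push_cast [Nat.cast_sub (by omega : m ≤ n - 1), Nat.cast_sub (by omega : 1 ≤ n)] at h
  linear_combination h

lemma hitCoeff_zero {n : ℕ} (hn : n ≠ 0) : hitCoeff n 0 = 1 / 2 := by
  have : (2 : ℝ) ^ n - 1 ≠ 0 := by
    have : (2 : ℝ) ≤ 2 ^ n := le_self_pow₀ one_le_two hn
    linarith
  rw [hitCoeff, tailChooseSum_zero, Nat.choose_zero_right, Nat.cast_one]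
  field_simp

lemma succ_mul_hitCoeff (n k : ℕ) (hk : k + 1 < n) :
    ((n : ℝ) + 1) * hitCoeff n (k + 1) =
      (k + 1) * hitCoeff n k + (n - (k + 2)) * hitCoeff n (k + 2) := by
  simp only [hitCoeff]
  generalize (2 * (2 ^ n - 1) : ℝ) = D
  have hlow : ((k : ℝ) + 1) * (tailChooseSum n k / (D * (n - 1).choose k)) =
      (n - (k + 1)) * tailChooseSum n k / (D * (n - 1).choose (k + 1)) := by
    calc ((k : ℝ) + 1) * (tailChooseSum n k / (D * (n - 1).choose k))
        = tailChooseSum n k / D * ((k + 1) / (n - 1).choose k) := by ring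
      _ = tailChooseSum n k / D * ((n - (k + 1)) / (n - 1).choose (k + 1)) := by
        rw [succ_div_choose_eq n k hk]
      _ = _ := by ring
  have hhigh : ((n : ℝ) - (k + 2)) * (tailChooseSum n (k + 2) / (D * (n - 1).choose (k + 2))) =
      (k + 2) * tailChooseSum n (k + 2) / (D * (n - 1).choose (k + 1)) := by
    rcases (by omega : k + 2 < n ∨ k + 2 = n) with hk' | hk'
    · have h := succ_div_choose_eq n (k + 1) hk'
      push_cast at h
      calc ((n : ℝ) - (k + 2)) * (tailChooseSum n (k + 2) / (D * (n - 1).choose (k + 2)))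
          = tailChooseSum n (k + 2) / D * ((n - (k + 1 + 1)) / (n - 1).choose (k + 2)) := by
            ring
        _ = tailChooseSum n (k + 2) / D * ((k + 1 + 1) / (n - 1).choose (k + 1)) := by
          rw [← h]
        _ = _ := by ring
    · rw [← hk', tailChooseSum_self]
      push_cast
      simp
  rw [hlow, hhigh, ← add_div, ← succ_mul_tailChooseSum, mul_div_assoc]

section Harmonic

variable {ι : Type*} [Fintype ι]

lemma eq_false_of_card_filter_eq_zero {x : ι → Bool} (hx : #{j | x j = true} = 0) :
    x = fun _ => false := by
  funext i
  simpa using filter_eq_empty_iff.1 (card_eq_zero.1 hx) (mem_univ i)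

variable [DecidableEq ι]

def IsHarmonicAt (f : (ι → Bool) → ℝ) (x : ι → Bool) : Prop :=
  (Fintype.card ι : ℝ) * f x = ∑ i, f (update x i (!x i))

lemma IsHarmonicAt.sub {f g : (ι → Bool) → ℝ} {x : ι → Bool} (hf : IsHarmonicAt f x)
    (hg : IsHarmonicAt g x) : IsHarmonicAt (f - g) x := by
  simp only [IsHarmonicAt, Pi.sub_apply, sum_sub_distrib, mul_sub] at *
  rw [hf, hg]

lemma IsHarmonicAt.apply_update_eq_of_forall_le {f : (ι → Bool) → ℝ} {x : ι → Bool}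
    (hf : IsHarmonicAt f x) (hmax : ∀ y, f y ≤ f x) (i : ι) : f (update x i (!x i)) = f x := by
  have hsum : ∑ i, (f x - f (update x i (!x i))) = 0 := by
    rw [sum_sub_distrib, sum_const, card_univ, nsmul_eq_mul, hf, sub_self]
  have := (sum_eq_zero_iff_of_nonneg fun i _ => sub_nonneg.2 (hmax _)).1 hsum i (mem_univ i)
  linarith

lemma card_filter_update_false_add_one {x : ι → Bool} {i : ι} (hi : x i = true) :
    #{j | update x i false j = true} + 1 = #{j | x j = true} := by
  have : ({j | update x i false j = true} : Finset ι) =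
      ({j | x j = true} : Finset ι).erase i := by
    ext j
    by_cases hj : j = i <;> simp [hj]
  rw [this, card_erase_add_one (by simpa using hi)]

lemma nonpos_of_isHarmonicAt {f : (ι → Bool) → ℝ} {B : Set (ι → Bool)}
    (hzero : (fun _ => false) ∈ B) (hB : ∀ y ∈ B, f y ≤ 0)
    (hf : ∀ x ∉ B, IsHarmonicAt f x) (x : ι → Bool) : f x ≤ 0 := by
  obtain ⟨z, hz⟩ := Finite.exists_max f
  suffices ∀ m z, #{j | z j = true} = m → (∀ y, f y ≤ f z) → f z ≤ 0 from
    (hz x).trans (this _ z rfl hz)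
  intro m
  induction m with
  | zero =>
    intro z hm _
    exact hB z (eq_false_of_card_filter_eq_zero hm ▸ hzero)
  | succ m ih =>
    intro z hm hmax
    by_cases hzB : z ∈ B
    · exact hB z hzB
    obtain ⟨i, hi⟩ : ∃ i, z i = true := by
      simpa [Finset.Nonempty] using card_pos.1 (by omega : 0 < #{j | z j = true})
    have hflip := (hf z hzB).apply_update_eq_of_forall_le hmax i
    rw [hi, Bool.not_true] at hflip
    rw [← hflip]
    refine ih _ ?_ fun y => hflip ▸ hmax y
    have := card_filter_update_false_add_one hi
    omega

theorem eq_of_isHarmonicAt {f g : (ι → Bool) → ℝ} {B : Set (ι → Bool)}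
    (hzero : (fun _ => false) ∈ B) (hB : ∀ y ∈ B, f y = g y)
    (hf : ∀ x ∉ B, IsHarmonicAt f x) (hg : ∀ x ∉ B, IsHarmonicAt g x) : f = g := by
  funext x
  have h₁ := nonpos_of_isHarmonicAt (f := f - g) hzero (fun y hy => by simp [hB y hy])
    (fun x hx => (hf x hx).sub (hg x hx)) x
  have h₂ := nonpos_of_isHarmonicAt (f := g - f) hzero (fun y hy => by simp [hB y hy])
    (fun x hx => (hg x hx).sub (hf x hx)) x
  simp only [Pi.sub_apply, sub_nonpos] at h₁ h₂
  exact le_antisymm h₁ h₂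

end Harmonic

section HitProbability

variable {ι : Type*} [Fintype ι] [DecidableEq ι] (j : ι)

def weightOff (x : ι → Bool) : ℕ := #{i | i ≠ j ∧ x i = true}

noncomputable def hitProb (x : ι → Bool) : ℝ :=
  1 / 2 + (if x j then 1 else -1) * hitCoeff (Fintype.card ι) (weightOff j x)

variable {j}

lemma weightOff_update_self (x : ι → Bool) (b : Bool) :
    weightOff j (update x j b) = weightOff j x := by
  unfold weightOff
  congr 1
  refine filter_congr fun i _ => ?_
  by_cases hi : i = j <;> simp [hi]

lemma weightOff_update_false_add_one {x : ι → Bool} {i : ι} (hij : i ≠ j) (hi : x i = true) :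
    weightOff j (update x i false) + 1 = weightOff j x := by
  have : ({l | l ≠ j ∧ update x i false l = true} : Finset ι) =
      ({l | l ≠ j ∧ x l = true} : Finset ι).erase i := by
    ext l
    by_cases hl : l = i <;> simp [hl]
  rw [weightOff, this, card_erase_add_one (by simp [hij, hi]), weightOff]

lemma weightOff_update_true {x : ι → Bool} {i : ι} (hij : i ≠ j) (hi : x i = false) :
    weightOff j (update x i true) = weightOff j x + 1 := by
  have : ({l | l ≠ j ∧ update x i true l = true} : Finset ι) =
      insert i ({l | l ≠ j ∧ x l = true} : Finset ι) := by
    ext l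
    by_cases hl : l = i <;> simp [hl, hij]
  rw [weightOff, this, card_insert_of_notMem (by simp [hi]), weightOff]

lemma card_filter_erase_eq_weightOff (x : ι → Bool) :
    #{i ∈ univ.erase j | x i = true} = weightOff j x := by
  rw [weightOff]
  congr 1
  ext i
  simp

lemma weightOff_add_card_filter_erase_not_add_one (x : ι → Bool) :
    weightOff j x + #{i ∈ univ.erase j | ¬x i = true} + 1 = Fintype.card ι := by
  rw [← card_filter_erase_eq_weightOff, card_filter_add_card_filter_not,
    card_erase_add_one (mem_univ j), card_univ]

lemma weightOff_ne_zero {x : ι → Bool} (hx₀ : x ≠ fun _ => false)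
    (hxj : x ≠ fun i => decide (i = j)) : weightOff j x ≠ 0 := by
  intro hk
  have hoff : ∀ i, i ≠ j → x i = false := fun i hij => by
    simpa [hij] using filter_eq_empty_iff.1 (card_eq_zero.1 hk) (mem_univ i)
  cases hj : x j
  · exact hx₀ (funext fun i => by by_cases hij : i = j <;> simp [hij, hj, hoff])
  · exact hxj (funext fun i => by by_cases hij : i = j <;> simp [hij, hj, hoff])

lemma hitProb_false : hitProb j (fun _ => false) = 0 := by
  have : weightOff j (fun _ : ι => false) = 0 := by simp [weightOff]
  rw [hitProb, this, hitCoeff_zero (Fintype.card_pos_iff.2 ⟨j⟩).ne']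
  norm_num

lemma hitProb_single : hitProb j (fun i => decide (i = j)) = 1 := by
  have : weightOff j (fun i => decide (i = j)) = 0 := by simp [weightOff]
  rw [hitProb, this, hitCoeff_zero (Fintype.card_pos_iff.2 ⟨j⟩).ne']
  norm_num

lemma isHarmonicAt_hitProb {x : ι → Bool} (hx : weightOff j x ≠ 0) :
    IsHarmonicAt (hitProb j) x := by
  obtain ⟨k, hk⟩ := Nat.exists_eq_succ_of_ne_zero hx
  set σ : ℝ := if x j then 1 else -1
  have hself : hitProb j x = 1 / 2 + σ * hitCoeff (Fintype.card ι) (k + 1) := by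
    rw [hitProb, hk]
  have hflip_j : hitProb j (update x j (!x j)) =
      1 / 2 - σ * hitCoeff (Fintype.card ι) (k + 1) := by
    cases hxj : x j <;> simp [hitProb, weightOff_update_self, hxj, hk, σ, sub_eq_add_neg]
  have hflip_true : ∀ i ∈ (univ.erase j).filter (x · = true),
      hitProb j (update x i (!x i)) = 1 / 2 + σ * hitCoeff (Fintype.card ι) k := by
    intro i hi
    obtain ⟨hij, hxi⟩ : i ≠ j ∧ x i = true := by simpa using hi
    have := weightOff_update_false_add_one hij hxi
    rw [hitProb, hxi, Bool.not_true, update_of_ne (Ne.symm hij),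
      (by omega : weightOff j (update x i false) = k)]
  have hflip_false : ∀ i ∈ (univ.erase j).filter (¬x · = true),
      hitProb j (update x i (!x i)) = 1 / 2 + σ * hitCoeff (Fintype.card ι) (k + 2) := by
    intro i hi
    obtain ⟨hij, hxi⟩ : i ≠ j ∧ x i = false := by simpa using hi
    rw [hitProb, hxi, Bool.not_false, update_of_ne (Ne.symm hij), weightOff_update_true hij hxi,
      hk]
  have hcard := weightOff_add_card_filter_erase_not_add_one (j := j) x
  rw [hk] at hcard
  have hcard' : (#{i ∈ univ.erase j | ¬x i = true} : ℝ) = Fintype.card ι - (k + 2) := by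
    rw [← hcard]
    push_cast
    ring
  have hrec := succ_mul_hitCoeff (Fintype.card ι) k (by omega)
  rw [IsHarmonicAt, hself, ← add_sum_erase _ _ (mem_univ j),
    ← sum_filter_add_sum_filter_not _ (x · = true), sum_congr rfl hflip_true,
    sum_congr rfl hflip_false, sum_const, sum_const, nsmul_eq_mul,
    nsmul_eq_mul, hcard', hflip_j, card_filter_erase_eq_weightOff, hk]
  push_cast
  linear_combination σ * hrec

end HitProbability

/-- Theorem 1 of the paper: for the simple random walk on the hypercube with
`a = (0,…,0,0)` and `b = (0,…,0,1)`, the hitting probability of `b` before `a`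
(characterized as the unique function with `p a = 0`, `p b = 1`, harmonic elsewhere)
is given by the explicit formula. Here `k` is the sum of the first `n-1` coordinates. -/
theorem stmt9 (n : ℕ) (hn : 1 ≤ n)
    (a b : Fin n → Bool)
    (ha : a = fun _ => false)
    (hb : b = fun i => decide (i = (⟨n - 1, by omega⟩ : Fin n)))
    (p : (Fin n → Bool) → ℝ)
    (hpa : p a = 0) (hpb : p b = 1)
    (hharm : ∀ x, x ≠ a → x ≠ b →
      (n : ℝ) * p x = ∑ i : Fin n, p (Function.update x i (!(x i))))
    (x : Fin n → Bool)
    (k : ℕ)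
    (hk : k = (Finset.univ.filter fun i : Fin n =>
      i ≠ (⟨n - 1, by omega⟩ : Fin n) ∧ x i = true).card) :
    (x (⟨n - 1, by omega⟩ : Fin n) = false →
      p x = 1/2 - (∑ i ∈ Finset.Icc (k + 1) n, (n.choose i : ℝ)) /
        (2 * (2 ^ n - 1) * ((n - 1).choose k : ℝ))) ∧
    (x (⟨n - 1, by omega⟩ : Fin n) = true →
      p x = 1/2 + (∑ i ∈ Finset.Icc (k + 1) n, (n.choose i : ℝ)) /
        (2 * (2 ^ n - 1) * ((n - 1).choose k : ℝ))) := by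
  set j : Fin n := ⟨n - 1, by omega⟩
  have hp : p = hitProb j := by
    refine eq_of_isHarmonicAt (B := {a, b}) (by simp [ha]) ?_ ?_ ?_
    · rintro y (rfl | rfl)
      · rw [hpa, ha, hitProb_false]
      · rw [hpb, hb, hitProb_single]
    · intro y hy
      simp only [Set.mem_insert_iff, Set.mem_singleton_iff, not_or] at hy
      rw [IsHarmonicAt, Fintype.card_fin]
      exact hharm y hy.1 hy.2
    · intro y hy
      simp only [Set.mem_insert_iff, Set.mem_singleton_iff, not_or] at hy
      exact isHarmonicAt_hitProb (weightOff_ne_zero (ha ▸ hy.1) (hb ▸ hy.2))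
  have hkx : weightOff j x = k := hk.symm
  subst hp
  constructor <;> intro hx
  · simp [hitProb, hitCoeff, tailChooseSum, hx, hkx, sub_eq_add_neg]
  · simp [hitProb, hitCoeff, tailChooseSum, hx, hkx]
end

section
/- The sequence u_k = (∑_{i=k+1}^{n} C(n,i))/(C(n-1,k)·(2^{n+1}−2)), for 0 ≤ k ≤ n-1, is strictly decreasing in k. -/
/-!
Up to the positive constant `2 ^ (n + 1) - 2`, `u k = T k / C(n-1, k)` with `T k = ∑_{i > k} C(n, i)`,
so `u (k + 1) < u k` amounts to `T (k + 1) · C(n-1, k) < T k · C(n-1, k + 1)`.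
Shifting the index, `T (k + 1) = ∑_{k < i < n} C(n, i + 1)` and `T k = ∑_{k < i < n} C(n, i) + 1`,
and termwise `C(n, i + 1) / C(n, i) = (n - i) / (i + 1) ≤ (n - 1 - k) / (k + 1) = C(n-1, k+1) / C(n-1, k)`
for `k < i`; the extra term `C(n, n) = 1` makes the inequality strict.
-/

open Finset

namespace Nat

theorem choose_succ_mul_choose_le_choose_mul_choose_succ {n k i : ℕ} (hki : k < i) :
    n.choose (i + 1) * (n - 1).choose k ≤ n.choose i * (n - 1).choose (k + 1) := by
  refine Nat.le_of_mul_le_mul_right ?_ (by positivity : 0 < (i + 1) * (k + 1))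
  have hi := Nat.choose_succ_right_eq n i
  have hk := Nat.choose_succ_right_eq (n - 1) k
  calc n.choose (i + 1) * (n - 1).choose k * ((i + 1) * (k + 1))
      = n.choose i * (n - 1).choose k * ((n - i) * (k + 1)) := by
        linear_combination (n - 1).choose k * (k + 1) * hi
    _ ≤ n.choose i * (n - 1).choose k * ((n - 1 - k) * (i + 1)) :=
        Nat.mul_le_mul_left _ (Nat.mul_le_mul (by omega) (by omega))
    _ = n.choose i * (n - 1).choose (k + 1) * ((i + 1) * (k + 1)) := by
        linear_combination n.choose i * (i + 1) * hk.symm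

theorem sum_Icc_choose_mul_choose_lt {n k : ℕ} (hk : k + 1 < n) :
    (∑ i ∈ Icc (k + 1 + 1) n, n.choose i) * (n - 1).choose k
      < (∑ i ∈ Icc (k + 1) n, n.choose i) * (n - 1).choose (k + 1) := by
  have hshift : ∑ i ∈ Icc (k + 1 + 1) n, n.choose i = ∑ i ∈ Ico (k + 1) n, n.choose (i + 1) := by
    rw [sum_Ico_add', ← Ico_add_one_right_eq_Icc]
  have hsplit : ∑ i ∈ Icc (k + 1) n, n.choose i = ∑ i ∈ Ico (k + 1) n, n.choose i + 1 := by
    rw [← Ico_add_one_right_eq_Icc, sum_Ico_succ_top (by omega), choose_self]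
  rw [hshift, hsplit, sum_mul, add_mul, sum_mul, one_mul]
  refine lt_add_of_le_of_pos (sum_le_sum fun i hi => ?_) (choose_pos (by omega))
  exact choose_succ_mul_choose_le_choose_mul_choose_succ (mem_Ico.1 hi).1

theorem sum_Icc_choose_div_choose_mul_lt {n k : ℕ} (hk : k + 1 < n) {c : ℝ} (hc : 0 < c) :
    (∑ i ∈ Icc (k + 1 + 1) n, (n.choose i : ℝ)) / ((n - 1).choose (k + 1) * c)
      < (∑ i ∈ Icc (k + 1) n, (n.choose i : ℝ)) / ((n - 1).choose k * c) := by
  have hc₀ : (0 : ℝ) < (n - 1).choose k := by exact_mod_cast choose_pos (by omega)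
  have hc₁ : (0 : ℝ) < (n - 1).choose (k + 1) := by exact_mod_cast choose_pos (by omega)
  rw [div_lt_div_iff₀ (by positivity) (by positivity), ← mul_assoc, ← mul_assoc]
  exact mul_lt_mul_of_pos_right (by exact_mod_cast sum_Icc_choose_mul_choose_lt hk) hc

end Nat

theorem stmt13_general (n : ℕ) (u : ℕ → ℝ)
    (hu : ∀ k, k ≤ n - 1 →
      u k = (∑ i ∈ Finset.Icc (k + 1) n, (n.choose i : ℝ)) /
        (((n - 1).choose k : ℝ) * (2 ^ (n + 1) - 2))) :
    ∀ k j, k < j → j ≤ n - 1 → u j < u k := by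
  have hanti : StrictAntiOn u (Set.Iic (n - 1)) := strictAntiOn_Iic_of_succ_lt fun m hm => by
    have hc : (0 : ℝ) < 2 ^ (n + 1) - 2 := by
      have : (2 : ℝ) ^ 1 < 2 ^ (n + 1) := pow_lt_pow_right₀ one_lt_two (by omega)
      linarith
    rw [Order.succ_eq_add_one, hu m hm.le, hu (m + 1) hm]
    exact Nat.sum_Icc_choose_div_choose_mul_lt (by omega) hc
  intro k j hkj hj
  exact hanti (Set.mem_Iic.2 (by omega)) hj hkj

theorem stmt13 (n : ℕ) (hn : 2 ≤ n) (u : ℕ → ℝ)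
    (hu : ∀ k, k ≤ n - 1 →
      u k = (∑ i ∈ Finset.Icc (k + 1) n, (n.choose i : ℝ)) /
        (((n - 1).choose k : ℝ) * (2 ^ (n + 1) - 2))) :
    ∀ k j, k < j → j ≤ n - 1 → u j < u k :=
  stmt13_general n u hu
end
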